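/- Let S be a reduced E-Fountain semigroup satisfying the congruence condition with E a subsemilattice (an E-Ehresmann semigroup). Then the right ample identity ea = a(ea)* (for all a in S, e in E) holds if and only if the generalized right ample identity (e(a(eaf)*)+)* = (a(eaf)*)+ (for all a in S, e, f in E) holds. -/
import Mathlib


/-- A reduced E-Fountain semigroup: a semigroup `S` with a distinguished set of
idempotents `E` such that `ef = e ↔ fe = e` on `E`, equipped with unary
operations `star` (the minimum right identity of `a` from `E`) and `plus`
(the minimum left identity of `a` from `E`), where the order on idempotents is
`e ≤ f ↔ ef = fe = e`. -/
structure RedEF (S : Type*) [Semigroup S] where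
  E : Set S
  idem : ∀ e ∈ E, e * e = e
  reduced : ∀ e ∈ E, ∀ f ∈ E, (e * f = e ↔ f * e = e)
  star : S → S
  plus : S → S
  star_mem : ∀ a : S, star a ∈ E
  plus_mem : ∀ a : S, plus a ∈ E
  mul_star : ∀ a : S, a * star a = a
  plus_mul : ∀ a : S, plus a * a = a
  star_min : ∀ a : S, ∀ e ∈ E, a * e = a → (star a * e = star a ∧ e * star a = star a)
  plus_min : ∀ a : S, ∀ e ∈ E, e * a = a → (e * plus a = plus a ∧ plus a * e = plus a)


lemma RedEF.star_of_E {S : Type*} [Semigroup S] (F : RedEF S) {e : S} (he : e ∈ F.E) :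
    F.star e = e := by
  have h := (F.star_min e e he (F.idem e he)).2
  have h2 := F.mul_star e
  rw [h] at h2
  exact h2

/-- In an E-Ehresmann semigroup (E a subsemilattice, congruence condition),
the right ample identity holds iff the generalized right ample identity holds. -/
theorem stmt_10 {S : Type*} [Semigroup S] (F : RedEF S)
    (hcs : ∀ a b : S, F.star (a * b) = F.star (F.star a * b))
    (hcp : ∀ a b : S, F.plus (a * b) = F.plus (a * F.plus b))
    (hclosed : ∀ e ∈ F.E, ∀ f ∈ F.E, e * f ∈ F.E)
    (hcomm : ∀ e ∈ F.E, ∀ f ∈ F.E, e * f = f * e) :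
    (∀ a : S, ∀ e ∈ F.E, e * a = a * F.star (e * a)) ↔
      (∀ a : S, ∀ e ∈ F.E, ∀ f ∈ F.E,
        F.star (e * F.plus (a * F.star (e * a * f))) =
          F.plus (a * F.star (e * a * f))) := by
  constructor
  · intro hA a e he f hf
    set s := F.star (e * a * f) with hs
    have hsf : s = F.star (e * a) * f := by
      have h2 : F.star (e * a) * f ∈ F.E := hclosed _ (F.star_mem _) _ hf
      rw [hs, hcs (e * a) f, F.star_of_E h2]
    have heb : e * (a * s) = a * s := by
      calc e * (a * s) = (e * a) * s := by rw [mul_assoc]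
        _ = (a * F.star (e * a)) * s := by rw [← hA a e he]
        _ = a * (F.star (e * a) * s) := by rw [mul_assoc]
        _ = a * s := by
            rw [hsf, ← mul_assoc (F.star (e * a)) (F.star (e * a)) f,
              F.idem _ (F.star_mem (e * a))]
    have hmin := (F.plus_min (a * s) e he heb).1
    rw [hmin, F.star_of_E (F.plus_mem _)]
  · intro hG a e he
    have key := hG a e he _ (F.star_mem (e * a))
    rw [F.mul_star (e * a)] at key
    set p := F.plus (a * F.star (e * a)) with hp
    have hepE : e * p ∈ F.E := hclosed _ he _ (F.plus_mem _)
    rw [F.star_of_E hepE] at key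
    have : a * F.star (e * a) = e * a := by
      calc a * F.star (e * a) = p * (a * F.star (e * a)) := (F.plus_mul _).symm
        _ = (e * p) * (a * F.star (e * a)) := by rw [key]
        _ = e * (p * (a * F.star (e * a))) := by rw [mul_assoc]
        _ = e * (a * F.star (e * a)) := by rw [F.plus_mul]
        _ = (e * a) * F.star (e * a) := by rw [mul_assoc]
        _ = e * a := F.mul_star _
    exact this.symm
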